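/- arXiv:1112.4558 — 2 statements merged into one kernel-verified Lean document; each statement's English description precedes it below -/
import Mathlib

section
/- Let p be a prime and let ℓ₁, …, ℓ_{p-1} be a sequence of p−1 integers, none of which is divisible by p. Then for any integer s there exists a subset A ⊆ {1, …, p−1} (possibly empty) such that ∑_{i∈A} ℓᵢ ≡ s (mod p). -/
/-!
Adjoining an index `i` turns the set of subset sums `S` into `S + {0, ℓᵢ}`. When
`ℓᵢ ≢ 0 (mod p)` the Cauchy–Davenport theorem shows this set has at least `min p (#S + 1)`
elements, so the `p - 1` nonzero terms produce at least `p` distinct subset sums, i.e. every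
residue mod `p`.
-/

open Finset Pointwise

variable {ι M : Type*} [AddCommMonoid M] [DecidableEq M]

def subsetSums (f : ι → M) (s : Finset ι) : Finset M :=
  s.powerset.image fun A ↦ ∑ i ∈ A, f i

lemma zero_mem_subsetSums (f : ι → M) (s : Finset ι) : 0 ∈ subsetSums f s :=
  mem_image.2 ⟨∅, empty_mem_powerset s, sum_empty⟩

lemma subsetSums_insert [DecidableEq ι] (f : ι → M) {s : Finset ι} {i : ι} (hi : i ∉ s) :
    subsetSums f (insert i s) = subsetSums f s + {0, f i} := by
  ext x
  simp only [subsetSums, powerset_insert, image_union, image_image, mem_union, mem_image,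
    mem_add, mem_insert, mem_singleton, Function.comp_def]
  constructor
  · rintro (⟨A, hA, rfl⟩ | ⟨A, hA, rfl⟩)
    · exact ⟨_, ⟨A, hA, rfl⟩, 0, Or.inl rfl, add_zero _⟩
    · rw [sum_insert fun h ↦ hi (mem_powerset.1 hA h), add_comm]
      exact ⟨_, ⟨A, hA, rfl⟩, f i, Or.inr rfl, rfl⟩
  · rintro ⟨_, ⟨A, hA, rfl⟩, y, rfl | rfl, rfl⟩
    · exact Or.inl ⟨A, hA, (add_zero _).symm⟩
    · refine Or.inr ⟨A, hA, ?_⟩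
      rw [sum_insert fun h ↦ hi (mem_powerset.1 hA h), add_comm]

lemma min_le_card_subsetSums [DecidableEq ι] {p : ℕ} (hp : p.Prime) (f : ι → ZMod p)
    (s : Finset ι) (hf : ∀ i ∈ s, f i ≠ 0) : min p (#s + 1) ≤ #(subsetSums f s) := by
  induction s using Finset.induction_on with
  | empty => exact min_le_of_right_le (card_pos.2 ⟨0, zero_mem_subsetSums f ∅⟩)
  | insert i s hi ih =>
    have ih := ih fun j hj ↦ hf j (mem_insert_of_mem hj)
    have hpair : #({0, f i} : Finset (ZMod p)) = 2 :=
      card_pair (hf i (mem_insert_self i s)).symm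
    have hcd := ZMod.cauchy_davenport hp ⟨0, zero_mem_subsetSums f s⟩ (insert_nonempty 0 {f i})
    rw [hpair] at hcd
    rw [subsetSums_insert f hi, card_insert_of_notMem hi]
    omega

theorem stmt_0 (p : ℕ) (hp : p.Prime) (l : Fin (p - 1) → ℤ)
    (hl : ∀ i, ¬ (p : ℤ) ∣ l i) (s : ℤ) :
    ∃ A : Finset (Fin (p - 1)), (p : ℤ) ∣ (∑ i ∈ A, l i) - s := by
  have : NeZero p := ⟨hp.ne_zero⟩
  have hl_ne : ∀ i ∈ univ, (l i : ZMod p) ≠ 0 := fun i _ h ↦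
    hl i ((ZMod.intCast_zmod_eq_zero_iff_dvd _ _).1 h)
  have hcard := min_le_card_subsetSums hp (fun i ↦ (l i : ZMod p)) univ hl_ne
  rw [card_univ, Fintype.card_fin, Nat.sub_add_cancel hp.one_le, min_self] at hcard
  have huniv : subsetSums (fun i ↦ (l i : ZMod p)) univ = univ :=
    eq_univ_of_card _ (le_antisymm (card_le_univ _) (by rwa [ZMod.card]))
  obtain ⟨A, -, hA⟩ := mem_image.1 (huniv ▸ mem_univ (s : ZMod p))
  refine ⟨A, (ZMod.intCast_eq_intCast_iff_dvd_sub _ _ _).1 ?_⟩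
  push_cast
  exact hA.symm
end

section
/- Let p be prime and let x, l₁, …, l_{2p−1} be integers with each lᵢ > 0. Suppose no lᵢ is divisible by p. Then there exist a subset A ⊆ {1,…,p−1} and a nonempty subset C ⊆ {p,…,2p−1} such that both x + ∑_{i∈A} lᵢ and x + ∑_{i∈A} lᵢ + ∑_{i∈C} lᵢ are divisible by p, and these two values are distinct; in particular at least one of them is a nonzero multiple of p. -/
/-!
Subset sums of nonzero residues grow fast: by Cauchy–Davenport, adjoining a nonzero residue `a`
to a family enlarges its set of subset sums `S` to a superset of `{0, a} + S`, which has at least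
`min p (#S + 1)` elements. Hence `p - 1` nonzero residues already have every residue as a subset sum.
Choose `A` among the first `p - 1` indices with `∑_A lᵢ ≡ -x`, and a nonempty `C` among the last
`p` indices with `∑_C lᵢ ≡ 0` (fix one index of `C` and cover the negative of its residue with the
other `p - 1`). As all `lᵢ` are positive, `∑_C lᵢ > 0`, so the two multiples of `p` differ.
-/

open Finset Pointwise

variable {ι M : Type*}

def indexedSubsetSums [AddCommMonoid M] [DecidableEq M] (s : Finset ι) (a : ι → M) : Finset M :=
  s.powerset.image fun B ↦ ∑ i ∈ B, a i

lemma mem_indexedSubsetSums [AddCommMonoid M] [DecidableEq M] {s : Finset ι} {a : ι → M}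
    {t : M} : t ∈ indexedSubsetSums s a ↔ ∃ B ⊆ s, ∑ i ∈ B, a i = t := by
  simp [indexedSubsetSums]

lemma insert_zero_add_indexedSubsetSums_subset [DecidableEq ι] [AddCommMonoid M] [DecidableEq M]
    {s : Finset ι} {j : ι} (hj : j ∉ s) (a : ι → M) :
    ({0, a j} : Finset M) + indexedSubsetSums s a ⊆ indexedSubsetSums (insert j s) a := by
  intro _ h
  obtain ⟨t, ht, _, hB, rfl⟩ := mem_add.1 h
  obtain ⟨B, hBs, rfl⟩ := mem_indexedSubsetSums.1 hB
  rw [mem_indexedSubsetSums]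
  rcases mem_insert.1 ht with rfl | ht
  · exact ⟨B, hBs.trans (subset_insert j s), (zero_add _).symm⟩
  rw [mem_singleton.1 ht]
  exact ⟨insert j B, insert_subset_insert j hBs, sum_insert fun hjB ↦ hj (hBs hjB)⟩

namespace ZMod

variable {p : ℕ} [DecidableEq ι]

theorem min_le_card_indexedSubsetSums (hp : p.Prime) (s : Finset ι) {a : ι → ZMod p}
    (ha : ∀ i ∈ s, a i ≠ 0) : min p (#s + 1) ≤ #(indexedSubsetSums s a) := by
  induction s using Finset.induction_on with
  | empty =>
    have : indexedSubsetSums ∅ a = {0} := by simp [indexedSubsetSums]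
    simp [this]
  | @insert j s hj ih =>
    have ih := ih fun i hi ↦ ha i (mem_insert_of_mem hi)
    have hpair : #({0, a j} : Finset (ZMod p)) = 2 :=
      card_pair (ha j (mem_insert_self j s)).symm
    have hcd := cauchy_davenport hp (insert_nonempty 0 {a j}) (t := indexedSubsetSums s a)
      ⟨0, mem_indexedSubsetSums.2 ⟨∅, empty_subset s, sum_empty⟩⟩
    have hsub := card_le_card (insert_zero_add_indexedSubsetSums_subset hj a)
    rw [hpair] at hcd
    rw [card_insert_of_notMem hj]
    omega

theorem exists_subset_sum_eq (hp : p.Prime) {s : Finset ι} {a : ι → ZMod p}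
    (ha : ∀ i ∈ s, a i ≠ 0) (hs : p - 1 ≤ #s) (t : ZMod p) : ∃ B ⊆ s, ∑ i ∈ B, a i = t := by
  have : Fact p.Prime := ⟨hp⟩
  have hcard := min_le_card_indexedSubsetSums hp s ha
  rw [min_eq_left (by omega)] at hcard
  have huniv : indexedSubsetSums s a = univ :=
    eq_univ_of_card _ (le_antisymm (card_le_univ _) (by rwa [card]))
  exact mem_indexedSubsetSums.1 (huniv ▸ mem_univ t)

theorem exists_nonempty_subset_sum_eq_zero (hp : p.Prime) {s : Finset ι} {a : ι → ZMod p}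
    (ha : ∀ i ∈ s, a i ≠ 0) (hs : p ≤ #s) :
    ∃ B ⊆ s, B.Nonempty ∧ ∑ i ∈ B, a i = 0 := by
  obtain ⟨j, hj⟩ := card_pos.1 (hs.trans_lt' hp.pos)
  obtain ⟨B, hBs, hB⟩ := exists_subset_sum_eq hp (s := s.erase j)
    (fun i hi ↦ ha i (mem_of_mem_erase hi)) (by rw [card_erase_of_mem hj]; omega) (-a j)
  have hjB : j ∉ B := fun h ↦ notMem_erase j s (hBs h)
  refine ⟨insert j B, insert_subset hj (hBs.trans (erase_subset j s)), insert_nonempty j B, ?_⟩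
  rw [sum_insert hjB, hB, add_neg_cancel]

end ZMod

theorem stmt_10 (p : ℕ) (hp : p.Prime) (x : ℤ) (l : Fin (2 * p - 1) → ℤ)
    (hpos : ∀ i, 0 < l i) (hnd : ∀ i, ¬ (p : ℤ) ∣ l i) :
    ∃ A C : Finset (Fin (2 * p - 1)),
      (∀ i ∈ A, (i : ℕ) < p - 1) ∧
      (∀ i ∈ C, p - 1 ≤ (i : ℕ)) ∧
      C.Nonempty ∧
      (p : ℤ) ∣ x + ∑ i ∈ A, l i ∧
      (p : ℤ) ∣ x + ∑ i ∈ A, l i + ∑ i ∈ C, l i ∧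
      x + ∑ i ∈ A, l i ≠ x + ∑ i ∈ A, l i + ∑ i ∈ C, l i ∧
      (x + ∑ i ∈ A, l i ≠ 0 ∨ x + ∑ i ∈ A, l i + ∑ i ∈ C, l i ≠ 0) := by
  have hl : ∀ i, (l i : ZMod p) ≠ 0 := fun i h ↦
    hnd i ((ZMod.intCast_zmod_eq_zero_iff_dvd _ _).1 h)
  set first : Finset (Fin (2 * p - 1)) := {i | (i : ℕ) < p - 1}
  have hfirst : #first = p - 1 := by rw [Fin.card_filter_val_lt]; omega
  have hlast : #firstᶜ = p := by rw [card_compl, Fintype.card_fin, hfirst]; omega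
  obtain ⟨A, hA, hAsum⟩ := ZMod.exists_subset_sum_eq hp (fun i _ ↦ hl i)
    hfirst.ge (-(x : ZMod p))
  obtain ⟨C, hC, hCne, hCsum⟩ := ZMod.exists_nonempty_subset_sum_eq_zero hp
    (fun i _ ↦ hl i) hlast.ge
  have hdvdA : (p : ℤ) ∣ x + ∑ i ∈ A, l i := by
    rw [← ZMod.intCast_zmod_eq_zero_iff_dvd]
    push_cast
    rw [hAsum, add_neg_cancel]
  have hdvdAC : (p : ℤ) ∣ x + ∑ i ∈ A, l i + ∑ i ∈ C, l i := by
    rw [← ZMod.intCast_zmod_eq_zero_iff_dvd]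
    push_cast
    rw [hAsum, hCsum, add_neg_cancel, add_zero]
  have hCpos : 0 < ∑ i ∈ C, l i := sum_pos (fun i _ ↦ hpos i) hCne
  refine ⟨A, C, fun i hi ↦ (mem_filter.1 (hA hi)).2, fun i hi ↦ ?_, hCne, hdvdA, hdvdAC,
    by omega, by omega⟩
  simpa [first] using hC hi
end
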